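/- arXiv:0904.4304 — 2 statements merged into one kernel-verified Lean document; each statement's English description precedes it below -/
import Mathlib

section
/- Let T ∈ M_n(k') be an invertible hermitian matrix, x_T = [[T/2],[1_n]] ∈ M_{2n,n}(k') (upper n×n block T/2, lower block 1_n), and T̃ = [[1_n, T/2],[1_n, −T/2]] ∈ GL_{2n}(k') (n×n blocks). For g ∈ U(H_n), there exists h ∈ U(T) with g·x_T = x_T·h if and only if there exist h_1, h_2 ∈ U(T) such that g = T̃^{−1}·diag(h_1*, h_2*)·T̃ (block-diagonal with n×n blocks h_1* and h_2*). Consequently the stabilizer in U(H_n) of the coset x_T·U(T) equals {T̃^{−1} diag(h_1*, h_2*) T̃ : h_1, h_2 ∈ U(T)}. -/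
open Matrix
noncomputable section

/-- Conjugate transpose of a matrix with respect to an involution `conj` of the field. -/
def ctr {k' : Type} [Field k'] (conj : k' ≃+* k') {m l : Type} (A : Matrix m l k') :
    Matrix l m k' := fun i j => conj (A j i)

/-- The split hermitian form `H_n = [[0,1_n],[1_n,0]]`. -/
def Hmat (k' : Type) [Field k'] (n : ℕ) : Matrix (Fin n ⊕ Fin n) (Fin n ⊕ Fin n) k' :=
  Matrix.fromBlocks 0 1 1 0

/-- Membership in the unitary group `U(A)` of an hermitian matrix `A`. -/
def inU {k' : Type} [Field k'] (conj : k' ≃+* k') {m : Type} [Fintype m] [DecidableEq m]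
    (A : Matrix m m k') (g : Matrix m m k') : Prop :=
  ctr conj g * A * g = A ∧ IsUnit g.det


/-!
Conjugation by `T̃` turns the hyperbolic form `H` into `diag(T, -T)` (`T̃ H T̃* = diag(T, -T)`)
and the column `x_T` into `[[T], [0]]`. Since `H⁻¹ = H`, `g ∈ U(H)` is equivalent to
`g H g* = H`, so for `D = T̃ g T̃⁻¹ = [[a, b], [c, d]]` it reads `D diag(T, -T) D* = diag(T, -T)`,
while `g x_T = x_T h` reads `c = 0` and `a T = T h`. For `c = 0` the unitarity of `D` forces
`b = 0` and `a T a* = T = d T d*`, i.e. `a = h₁*` and `d = h₂*` with `h₁, h₂ ∈ U(T)`.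
Conversely, for `D = diag(h₁*, h₂*)` one can take `h = h₁⁻¹`.
-/

section ConjTranspose

variable {k' : Type} [Field k'] (conj : k' ≃+* k') {l m p q : Type}

lemma ctr_mul [Fintype l] (A : Matrix m l k') (B : Matrix l p k') :
    ctr conj (A * B) = ctr conj B * ctr conj A := by
  ext i j
  simp only [ctr, mul_apply, map_sum, map_mul]
  exact Finset.sum_congr rfl fun _ _ => mul_comm _ _

lemma ctr_ctr (hinvol : ∀ a, conj (conj a) = a) (A : Matrix m l k') :
    ctr conj (ctr conj A) = A := by
  ext i j
  exact hinvol _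

lemma ctr_one [DecidableEq m] : ctr conj (1 : Matrix m m k') = 1 := by
  ext i j
  by_cases h : i = j <;> simp [ctr, one_apply, h, eq_comm]

lemma ctr_zero : ctr conj (0 : Matrix m l k') = 0 := by
  ext i j
  simp [ctr]

lemma ctr_eq_zero_iff {A : Matrix m l k'} : ctr conj A = 0 ↔ A = 0 := by
  refine ⟨fun h => ?_, fun h => h ▸ ctr_zero conj⟩
  ext i j
  simpa [ctr] using congrFun (congrFun h j) i

lemma ctr_neg (A : Matrix m l k') : ctr conj (-A) = -ctr conj A := by
  ext i j
  simp [ctr]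

lemma ctr_smul (c : k') (A : Matrix m l k') : ctr conj (c • A) = conj c • ctr conj A := by
  ext i j
  simp [ctr]

lemma ctr_fromBlocks (A : Matrix m l k') (B : Matrix m p k') (C : Matrix q l k')
    (D : Matrix q p k') :
    ctr conj (fromBlocks A B C D) =
      fromBlocks (ctr conj A) (ctr conj C) (ctr conj B) (ctr conj D) := by
  ext (i | i) (j | j) <;> rfl

lemma det_ctr [Fintype m] [DecidableEq m] (A : Matrix m m k') :
    (ctr conj A).det = conj A.det := by
  change ((conj : k' →+* k').mapMatrix A)ᵀ.det = _
  rw [det_transpose, ← RingHom.map_det]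
  rfl

end ConjTranspose

section UnitaryGroup

variable {k' : Type} [Field k'] (conj : k' ≃+* k') {N : Type} [Fintype N] [DecidableEq N]

lemma isUnit_det_of_ctr_mul_mul_eq {A g : Matrix N N k'} (hA : IsUnit A.det)
    (h : ctr conj g * A * g = A) : IsUnit g.det := by
  have hdet := congrArg det h
  rw [det_mul, det_mul] at hdet
  exact isUnit_of_mul_isUnit_right (hdet ▸ hA)

lemma isUnit_det_of_mul_mul_ctr_eq {A g : Matrix N N k'} (hA : IsUnit A.det)
    (h : g * A * ctr conj g = A) : IsUnit g.det := by
  have hdet := congrArg det h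
  rw [det_mul, det_mul] at hdet
  exact isUnit_of_mul_isUnit_left (isUnit_of_mul_isUnit_left (hdet ▸ hA))

lemma inU_iff {A g : Matrix N N k'} (hA : IsUnit A.det) :
    inU conj A g ↔ ctr conj g * A * g = A :=
  ⟨And.left, fun h => ⟨h, isUnit_det_of_ctr_mul_mul_eq conj hA h⟩⟩

lemma mul_inv_mul_ctr_eq {A g : Matrix N N k'} (hA : IsUnit A.det) (hg : IsUnit g.det)
    (h : ctr conj g * A * g = A) : g * A⁻¹ * ctr conj g = A⁻¹ := by
  have hctr : ctr conj g = A * g⁻¹ * A⁻¹ :=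
    calc ctr conj g = ctr conj g * A * g * g⁻¹ * A⁻¹ := by
          rw [mul_nonsing_inv_cancel_right _ _ hg,
            mul_nonsing_inv_cancel_right _ _ hA]
      _ = A * g⁻¹ * A⁻¹ := by rw [h]
  rw [hctr, Matrix.mul_assoc g, ← Matrix.mul_assoc A⁻¹, ← Matrix.mul_assoc A⁻¹,
    nonsing_inv_mul _ hA, Matrix.one_mul, ← Matrix.mul_assoc, mul_nonsing_inv _ hg,
    Matrix.one_mul]

lemma inU_iff_mul_inv_mul_ctr_eq (hinvol : ∀ a, conj (conj a) = a) {A g : Matrix N N k'}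
    (hA : IsUnit A.det) : inU conj A g ↔ g * A⁻¹ * ctr conj g = A⁻¹ := by
  refine ⟨fun ⟨h, hg⟩ => mul_inv_mul_ctr_eq conj hA hg h, fun h => ?_⟩
  have hA' : IsUnit A⁻¹.det := isUnit_nonsing_inv_det A hA
  have hg : IsUnit g.det := isUnit_det_of_mul_mul_ctr_eq conj hA' h
  have hg' : IsUnit (ctr conj g).det := by rw [det_ctr]; exact hg.map _
  refine ⟨?_, hg⟩
  simpa only [ctr_ctr conj hinvol, nonsing_inv_nonsing_inv A hA] using
    mul_inv_mul_ctr_eq conj hA' hg' (by rwa [ctr_ctr conj hinvol])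

lemma inU.inv {A g : Matrix N N k'} (h : inU conj A g) : inU conj A g⁻¹ := by
  obtain ⟨hU, hg⟩ := h
  refine ⟨?_, isUnit_nonsing_inv_det g hg⟩
  calc ctr conj g⁻¹ * A * g⁻¹ = ctr conj g⁻¹ * (ctr conj g * A * g) * g⁻¹ := by rw [hU]
    _ = ctr conj (g * g⁻¹) * A * (g * g⁻¹) := by simp only [ctr_mul, Matrix.mul_assoc]
    _ = A := by rw [mul_nonsing_inv _ hg, ctr_one, Matrix.one_mul, Matrix.mul_one]

lemma mul_mul_ctr_eq_iff_of_conj {P A D : Matrix N N k'} (hP : IsUnit P.det) :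
    P⁻¹ * D * P * A * ctr conj (P⁻¹ * D * P) = A ↔
      D * (P * A * ctr conj P) * ctr conj D = P * A * ctr conj P := by
  set g := P⁻¹ * D * P
  have hPg : P * g = D * P := by
    rw [← Matrix.mul_assoc, ← Matrix.mul_assoc, mul_nonsing_inv _ hP, Matrix.one_mul]
  have hconj :
      P * (g * A * ctr conj g) * ctr conj P = D * (P * A * ctr conj P) * ctr conj D := by
    calc P * (g * A * ctr conj g) * ctr conj P = P * g * A * ctr conj (P * g) := by
          simp only [ctr_mul, Matrix.mul_assoc]
      _ = D * (P * A * ctr conj P) * ctr conj D := by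
          simp only [hPg, ctr_mul, Matrix.mul_assoc]
  have hPu : IsUnit P := (isUnit_iff_isUnit_det P).2 hP
  have hP' : IsUnit (ctr conj P) := by
    rw [isUnit_iff_isUnit_det, det_ctr]; exact hP.map _
  rw [← hconj, hP'.mul_left_inj, hPu.mul_right_inj]

lemma nonsing_inv_mul_mul_mul_eq_mul_iff {m : Type} [Fintype m] {P D : Matrix N N k'}
    (hP : IsUnit P.det) (x : Matrix N m k') (h : Matrix m m k') :
    P⁻¹ * D * P * x = x * h ↔ D * (P * x) = P * x * h := by
  constructor
  · intro hx
    calc D * (P * x) = P * (P⁻¹ * D * P * x) := by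
          simp only [← Matrix.mul_assoc, mul_nonsing_inv _ hP, Matrix.one_mul]
      _ = P * x * h := by rw [hx, Matrix.mul_assoc]
  · intro hx
    calc P⁻¹ * D * P * x = P⁻¹ * (D * (P * x)) := by simp only [Matrix.mul_assoc]
      _ = x * h := by rw [hx, Matrix.mul_assoc, nonsing_inv_mul_cancel_left _ _ hP]

end UnitaryGroup

section Blocks

variable {k' : Type} [Field k'] (conj : k' ≃+* k') {ι : Type} [Fintype ι] [DecidableEq ι]

lemma fromBlocks_mul_fromRows_eq_iff {T a b c d h : Matrix ι ι k'} (hT : IsUnit T.det) :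
    fromBlocks a b c d * (fromRows T 0 : Matrix (ι ⊕ ι) ι k') = fromRows T 0 * h ↔
      c = 0 ∧ a * T = T * h := by
  rw [fromBlocks_mul_fromRows, fromRows_mul, fromRows_inj.eq_iff]
  simp only [Matrix.mul_zero, add_zero, Matrix.zero_mul,
    ((isUnit_iff_isUnit_det T).2 hT).mul_left_eq_zero]
  exact and_comm

lemma fromBlocks_mul_mul_ctr_eq_iff {T a b d : Matrix ι ι k'} (hT : IsUnit T.det) :
    fromBlocks a b 0 d * fromBlocks T 0 0 (-T) * ctr conj (fromBlocks a b 0 d) =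
        fromBlocks T 0 0 (-T) ↔
      b = 0 ∧ a * T * ctr conj a = T ∧ d * T * ctr conj d = T := by
  rw [ctr_fromBlocks, ctr_zero, fromBlocks_multiply, fromBlocks_multiply, fromBlocks_inj]
  simp only [Matrix.mul_zero, Matrix.zero_mul, add_zero, zero_add, Matrix.mul_neg,
    Matrix.neg_mul, neg_inj, neg_eq_zero]
  constructor
  · rintro ⟨h11, -, h21, h22⟩
    have hd := isUnit_det_of_mul_mul_ctr_eq conj hT h22
    have hb : b = 0 := by
      rw [← ctr_eq_zero_iff conj, ← ((isUnit_iff_isUnit_det (d * T)).2 _).mul_right_eq_zero]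
      · exact h21
      · rw [det_mul]; exact hd.mul hT
    subst hb
    simp only [Matrix.zero_mul, neg_zero, add_zero] at h11
    exact ⟨rfl, h11, h22⟩
  · rintro ⟨rfl, h1, h2⟩
    simp [ctr_zero, h1, h2]

end Blocks

lemma inv_two_smul_add_inv_two_smul {k' M : Type} [Field k'] [NeZero (2 : k')]
    [AddCommMonoid M] [Module k' M] (x : M) : (2 : k')⁻¹ • x + (2 : k')⁻¹ • x = x := by
  rw [← add_smul, ← two_mul, mul_inv_cancel₀ two_ne_zero, one_smul]

section TildeMat

variable {k' : Type} [Field k'] [NeZero (2 : k')] {ι : Type} [Fintype ι] [DecidableEq ι]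

def xMat (T : Matrix ι ι k') : Matrix (ι ⊕ ι) ι k' := fromRows ((2 : k')⁻¹ • T) 1

def tildeMat (T : Matrix ι ι k') : Matrix (ι ⊕ ι) (ι ⊕ ι) k' :=
  fromBlocks 1 ((2 : k')⁻¹ • T) 1 (-((2 : k')⁻¹ • T))

lemma tildeMat_mul_xMat (T : Matrix ι ι k') : tildeMat T * xMat T = fromRows T 0 := by
  rw [tildeMat, xMat, fromBlocks_mul_fromRows, Matrix.one_mul, Matrix.mul_one, Matrix.mul_one,
    inv_two_smul_add_inv_two_smul, add_neg_cancel]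

lemma isUnit_det_tildeMat {T : Matrix ι ι k'} (hT : IsUnit T.det) : IsUnit (tildeMat T).det := by
  rw [tildeMat, det_fromBlocks_one₁₁, Matrix.one_mul, sub_eq_add_neg, ← neg_add,
    inv_two_smul_add_inv_two_smul, det_neg]
  exact ((isUnit_neg_one).pow _).mul hT

lemma tildeMat_mul_mul_ctr (conj : k' ≃+* k') {T : Matrix ι ι k'} (hherm : ctr conj T = T) :
    tildeMat T * fromBlocks 0 1 1 0 * ctr conj (tildeMat T) = fromBlocks T 0 0 (-T) := by
  rw [tildeMat, ctr_fromBlocks, ctr_one, ctr_neg, ctr_smul, map_inv₀, map_ofNat, hherm,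
    fromBlocks_multiply, fromBlocks_multiply]
  simp only [Matrix.mul_zero, Matrix.mul_one, Matrix.one_mul, zero_add, add_zero,
    inv_two_smul_add_inv_two_smul, add_neg_cancel, neg_add_cancel, ← neg_add]

end TildeMat

section Stabilizer

variable {k' : Type} [Field k'] [NeZero (2 : k')] (conj : k' ≃+* k') {ι : Type} [Fintype ι]
  [DecidableEq ι]

lemma inU_hyperbolic_conj_tildeMat_iff (hinvol : ∀ a, conj (conj a) = a)
    {T : Matrix ι ι k'} (hherm : ctr conj T = T) (hT : IsUnit T.det)
    (D : Matrix (ι ⊕ ι) (ι ⊕ ι) k') :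
    inU conj (fromBlocks 0 1 1 0) ((tildeMat T)⁻¹ * D * tildeMat T) ↔
      D * fromBlocks T 0 0 (-T) * ctr conj D = fromBlocks T 0 0 (-T) := by
  have hHH : (fromBlocks 0 1 1 0 : Matrix (ι ⊕ ι) (ι ⊕ ι) k') * fromBlocks 0 1 1 0 = 1 := by
    simp [fromBlocks_multiply]
  rw [inU_iff_mul_inv_mul_ctr_eq conj hinvol (isUnit_det_of_left_inverse hHH),
    inv_eq_left_inv hHH, mul_mul_ctr_eq_iff_of_conj conj (isUnit_det_tildeMat hT),
    tildeMat_mul_mul_ctr conj hherm]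

lemma inU_hyperbolic_and_stabilizes_xMat_iff (hinvol : ∀ a, conj (conj a) = a)
    {T : Matrix ι ι k'} (hherm : ctr conj T = T) (hT : IsUnit T.det)
    (g : Matrix (ι ⊕ ι) (ι ⊕ ι) k') :
    (inU conj (fromBlocks 0 1 1 0) g ∧ ∃ h, inU conj T h ∧ g * xMat T = xMat T * h) ↔
      ∃ h₁ h₂, inU conj T h₁ ∧ inU conj T h₂ ∧
        g = (tildeMat T)⁻¹ * fromBlocks (ctr conj h₁) 0 0 (ctr conj h₂) * tildeMat T := by
  have hP := isUnit_det_tildeMat hT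
  obtain ⟨D, rfl⟩ : ∃ D, g = (tildeMat T)⁻¹ * D * tildeMat T :=
    ⟨tildeMat T * g * (tildeMat T)⁻¹, by
      rw [← Matrix.mul_assoc, ← Matrix.mul_assoc, nonsing_inv_mul _ hP, Matrix.one_mul,
        nonsing_inv_mul_cancel_right _ _ hP]⟩
  have hconj_inj : ∀ E, (tildeMat T)⁻¹ * D * tildeMat T = (tildeMat T)⁻¹ * E * tildeMat T ↔
      D = E := fun E => by
    rw [((isUnit_iff_isUnit_det _).2 hP).mul_left_inj,
      ((isUnit_iff_isUnit_det _).2 (isUnit_nonsing_inv_det _ hP)).mul_right_inj]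
  obtain ⟨a, b, c, d, rfl⟩ : ∃ a b c d, D = fromBlocks a b c d :=
    ⟨_, _, _, _, (fromBlocks_toBlocks D).symm⟩
  simp only [hconj_inj, inU_hyperbolic_conj_tildeMat_iff conj hinvol hherm hT,
    nonsing_inv_mul_mul_mul_eq_mul_iff hP, tildeMat_mul_xMat, fromBlocks_mul_fromRows_eq_iff hT,
    fromBlocks_inj]
  constructor
  · rintro ⟨hD, h, -, rfl, -⟩
    obtain ⟨rfl, ha, hd⟩ := (fromBlocks_mul_mul_ctr_eq_iff conj hT).1 hD
    refine ⟨ctr conj a, ctr conj d, ?_, ?_, (ctr_ctr conj hinvol a).symm, rfl, rfl,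
      (ctr_ctr conj hinvol d).symm⟩ <;>
    rwa [inU_iff conj hT, ctr_ctr conj hinvol]
  · rintro ⟨h₁, h₂, hh₁, hh₂, rfl, rfl, rfl, rfl⟩
    have hU₁ : ctr conj h₁ * T * ctr conj (ctr conj h₁) = T := by
      rw [ctr_ctr conj hinvol]; exact hh₁.1
    have hU₂ : ctr conj h₂ * T * ctr conj (ctr conj h₂) = T := by
      rw [ctr_ctr conj hinvol]; exact hh₂.1
    refine ⟨(fromBlocks_mul_mul_ctr_eq_iff conj hT).2 ⟨rfl, hU₁, hU₂⟩, h₁⁻¹, hh₁.inv, rfl, ?_⟩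
    rw [← mul_nonsing_inv_cancel_right h₁ (ctr conj h₁ * T) hh₁.2, hh₁.1]

end Stabilizer

theorem stmt0_general {k' : Type} [Field k'] [CharZero k']
    (conj : k' ≃+* k') (hinvol : ∀ a, conj (conj a) = a)
    (n : ℕ) (T : Matrix (Fin n) (Fin n) k')
    (hherm : ctr conj T = T) (hTinv : IsUnit T.det)
    (xT : Matrix (Fin n ⊕ Fin n) (Fin n) k')
    (hxT : xT = Matrix.fromRows ((2 : k')⁻¹ • T) 1)
    (Ttil : Matrix (Fin n ⊕ Fin n) (Fin n ⊕ Fin n) k')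
    (hTtil : Ttil = Matrix.fromBlocks 1 ((2 : k')⁻¹ • T) 1 (-((2 : k')⁻¹ • T))) :
    (∀ g : Matrix (Fin n ⊕ Fin n) (Fin n ⊕ Fin n) k', inU conj (Hmat k' n) g →
      ((∃ h, inU conj T h ∧ g * xT = xT * h) ↔
        (∃ h₁ h₂, inU conj T h₁ ∧ inU conj T h₂ ∧
          g = Ttil⁻¹ * Matrix.fromBlocks (ctr conj h₁) 0 0 (ctr conj h₂) * Ttil)))
    ∧
    {g : Matrix (Fin n ⊕ Fin n) (Fin n ⊕ Fin n) k' |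
        inU conj (Hmat k' n) g ∧ ∃ h, inU conj T h ∧ g * xT = xT * h} =
      {g : Matrix (Fin n ⊕ Fin n) (Fin n ⊕ Fin n) k' |
        ∃ h₁ h₂, inU conj T h₁ ∧ inU conj T h₂ ∧
          g = Ttil⁻¹ * Matrix.fromBlocks (ctr conj h₁) 0 0 (ctr conj h₂) * Ttil} := by
  subst hxT hTtil
  have key := inU_hyperbolic_and_stabilizes_xMat_iff conj hinvol hherm hTinv
  exact ⟨fun g hg => ⟨fun hx => (key g).1 ⟨hg, hx⟩, fun hx => ((key g).2 hx).2⟩,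
    Set.ext key⟩

/-- description of the stabilizer in `U(H_n)` of the coset `x_T · U(T)`. -/
theorem stmt0 {k' : Type} [Field k'] [CharZero k']
    (conj : k' ≃+* k') (hinvol : ∀ a, conj (conj a) = a) (hne : ∃ a, conj a ≠ a)
    (n : ℕ) (T : Matrix (Fin n) (Fin n) k')
    (hherm : ctr conj T = T) (hTinv : IsUnit T.det)
    (xT : Matrix (Fin n ⊕ Fin n) (Fin n) k')
    (hxT : xT = Matrix.fromRows ((2 : k')⁻¹ • T) 1)
    (Ttil : Matrix (Fin n ⊕ Fin n) (Fin n ⊕ Fin n) k')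
    (hTtil : Ttil = Matrix.fromBlocks 1 ((2 : k')⁻¹ • T) 1 (-((2 : k')⁻¹ • T))) :
    (∀ g : Matrix (Fin n ⊕ Fin n) (Fin n ⊕ Fin n) k', inU conj (Hmat k' n) g →
      ((∃ h, inU conj T h ∧ g * xT = xT * h) ↔
        (∃ h₁ h₂, inU conj T h₁ ∧ inU conj T h₂ ∧
          g = Ttil⁻¹ * Matrix.fromBlocks (ctr conj h₁) 0 0 (ctr conj h₂) * Ttil)))
    ∧
    {g : Matrix (Fin n ⊕ Fin n) (Fin n ⊕ Fin n) k' |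
        inU conj (Hmat k' n) g ∧ ∃ h, inU conj T h ∧ g * xT = xT * h} =
      {g : Matrix (Fin n ⊕ Fin n) (Fin n ⊕ Fin n) k' |
        ∃ h₁ h₂, inU conj T h₁ ∧ inU conj T h₂ ∧
          g = Ttil⁻¹ * Matrix.fromBlocks (ctr conj h₁) 0 0 (ctr conj h₂) * Ttil} :=
  stmt0_general conj hinvol n T hherm hTinv xT hxT Ttil hTtil
end
end

section
/- Let n ≥ 2 and let T ∈ M_n(k') be invertible diagonal. Let h = [[a,b],[c,d]] ∈ GL_2(k') satisfy h*·[[0,1],[1,0]]·h = [[0,1],[1,0]], and let h̃ ∈ M_{2n}(k') be the matrix agreeing with the identity matrix except that (h̃)_{n,n} = a, (h̃)_{n,2n} = b, (h̃)_{2n,n} = c, (h̃)_{2n,2n} = d. Then h̃ ∈ U(H_n), and for every x ∈ 𝔛_T: f_{T,n}(h̃·x) = g(x, (d, −c)ᵗ). -/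
open Matrix MeasureTheory
open scoped BigOperators
noncomputable section
open Classical

/-- The hermitian form `H_1 = [[0,1],[1,0]]`. -/
def H1 (k' : Type) [Field k'] : Matrix (Fin 2) (Fin 2) k' := !![0, 1; 1, 0]

/-- The lower `n × n` block of a `2n × n` matrix. -/
def lowerBlock {k' : Type} [Field k'] {n : ℕ} (x : Matrix (Fin n ⊕ Fin n) (Fin n) k') :
    Matrix (Fin n) (Fin n) k' := fun i j => x (Sum.inr i) j

/-- `d_i(y)` : determinant of the upper left `i × i` block of `y`. -/
def dmin {k' : Type} [Field k'] {n : ℕ} (i : ℕ) (hi : i ≤ n)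
    (y : Matrix (Fin n) (Fin n) k') : k' :=
  (y.submatrix (Fin.castLE hi) (Fin.castLE hi)).det

/-- The relative invariant `f_{T,i}(x) = d_i(x₂ T⁻¹ x₂*)`. -/
def fTi {k' : Type} [Field k'] (conj : k' ≃+* k') {n : ℕ}
    (T : Matrix (Fin n) (Fin n) k') (x : Matrix (Fin n ⊕ Fin n) (Fin n) k')
    (i : ℕ) (hi : i ≤ n) : k' :=
  dmin i hi (lowerBlock x * T⁻¹ * ctr conj (lowerBlock x))

/-- The matrix `M(x,v)` : first `n−1` rows those of `x₂`, last row
`v_1·(last row of x₂) − v_2·(last row of the upper block of x)`. -/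
def Mxv {k' : Type} [Field k'] {n : ℕ} (x : Matrix (Fin n ⊕ Fin n) (Fin n) k')
    (v : Fin 2 → k') : Matrix (Fin n) (Fin n) k' :=
  fun i j =>
    if (i : ℕ) = n - 1 then v 0 * x (Sum.inr i) j - v 1 * x (Sum.inl i) j
    else x (Sum.inr i) j

/-- `g(x,v) = det(M(x,v) T⁻¹ M(x,v)*)`. -/
def gxv {k' : Type} [Field k'] (conj : k' ≃+* k') {n : ℕ}
    (T : Matrix (Fin n) (Fin n) k') (x : Matrix (Fin n ⊕ Fin n) (Fin n) k')
    (v : Fin 2 → k') : k' :=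
  (Mxv x v * T⁻¹ * ctr conj (Mxv x v)).det

/-!
`h̃` is `h` acting on the hyperbolic plane spanned by `e_n, e_{2n}` and the identity on its
`H_n`-orthogonal complement, so `h*H₁h = H₁` gives `h̃*H_n h̃ = H_n`; invertibility of `h̃` then
follows from that of `H_n`. Left multiplication by `h̃` changes only rows `n` and `2n` of `x`, and
the new row `2n` is `c·(row n) + d·(row 2n)`, which is the last row of `M(x, (d, -c))`. Hence
`(h̃x)₂ = M(x, (d, -c))`, and `f_{T,n} = d_n` is the full determinant.
-/

namespace Matrix

variable {ι κ R : Type*} [DecidableEq ι]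

/-- The identity matrix with its `2 × 2` block on the indices `p, q` replaced by `h`; for
`p = inl (n-1)`, `q = inr (n-1)` this is the paper's `h̃`. -/
def embed2 [Zero R] [One R] (p q : ι) (h : Matrix (Fin 2) (Fin 2) R) : Matrix ι ι R :=
  fun i j =>
    if i = p ∧ j = p then h 0 0
    else if i = p ∧ j = q then h 0 1
    else if i = q ∧ j = p then h 1 0
    else if i = q ∧ j = q then h 1 1
    else (1 : Matrix ι ι R) i j

variable [Fintype ι] [Semiring R] {p q : ι}

theorem embed2_mul_apply (hpq : p ≠ q) (h : Matrix (Fin 2) (Fin 2) R) (x : Matrix ι κ R)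
    (i : ι) (j : κ) :
    (embed2 p q h * x) i j =
      if i = p then h 0 0 * x p j + h 0 1 * x q j
      else if i = q then h 1 0 * x p j + h 1 1 * x q j
      else x i j := by
  rw [mul_apply]
  split_ifs with hp hq
  · subst hp
    rw [Fintype.sum_eq_add i q hpq] <;> simp [embed2, hpq, hpq.symm]
    intro k hk hkq; simp [hk, hkq, Ne.symm hk]
  · subst hq
    rw [Fintype.sum_eq_add p i hpq] <;> simp [embed2, hpq, hpq.symm]
    intro k hk hkq; simp [hk, hkq, Ne.symm hkq]
  · rw [Fintype.sum_eq_single i] <;> simp [embed2, hp, hq, one_apply]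
    intro k hk; simp [Ne.symm hk]

theorem mul_embed2_apply (hpq : p ≠ q) (h : Matrix (Fin 2) (Fin 2) R) (y : Matrix κ ι R)
    (i : κ) (j : ι) :
    (y * embed2 p q h) i j =
      if j = p then y i p * h 0 0 + y i q * h 1 0
      else if j = q then y i p * h 0 1 + y i q * h 1 1
      else y i j := by
  rw [mul_apply]
  split_ifs with hp hq
  · subst hp
    rw [Fintype.sum_eq_add j q hpq] <;> simp [embed2, hpq, hpq.symm]
    intro k hk hkq; simp [hk, hkq]
  · subst hq
    rw [Fintype.sum_eq_add p j hpq] <;> simp [embed2, hpq.symm]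
    intro k hk hkq; simp [hk, hkq]
  · rw [Fintype.sum_eq_single j] <;> simp [embed2, hp, hq, one_apply]
    intro k hk; simp [hk]

end Matrix

section Form

open Matrix

variable {ι k' : Type} [DecidableEq ι] [Field k'] (conj : k' ≃+* k')

theorem ctr_embed2 (p q : ι) (h : Matrix (Fin 2) (Fin 2) k') :
    ctr conj (embed2 p q h) = embed2 p q (ctr conj h) := by
  ext i j
  simp only [ctr, embed2]
  split_ifs <;> aesop (add simp Matrix.one_apply)

variable [Fintype ι]

theorem ctr_embed2_mul_mul_embed2 {p q : ι} (hpq : p ≠ q) (J : Matrix ι ι k')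
    (hJ : ∀ i, i ≠ p → i ≠ q → J i p = 0 ∧ J i q = 0 ∧ J p i = 0 ∧ J q i = 0)
    {h : Matrix (Fin 2) (Fin 2) k'}
    (hh : ctr conj h * J.submatrix ![p, q] ![p, q] * h = J.submatrix ![p, q] ![p, q]) :
    ctr conj (embed2 p q h) * J * embed2 p q h = J := by
  have hh' a b := congrFun (congrFun hh a) b
  simp only [Fin.forall_fin_two, mul_apply, Fin.sum_univ_two, ctr, submatrix_apply,
    cons_val_zero, cons_val_one] at hh'
  obtain ⟨⟨h00, h01⟩, h10, h11⟩ := hh'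
  rw [ctr_embed2, mul_assoc]
  ext i j
  simp only [embed2_mul_apply hpq, mul_embed2_apply hpq, ctr]
  -- entries in `{p, q}²` are entries of `hh`; the others vanish by `hJ`
  split_ifs <;> subst_vars
  all_goals first
    | linear_combination h00 | linear_combination h01
    | linear_combination h10 | linear_combination h11
    | simp_all

theorem isUnit_det_of_ctr_mul_mul_eq_s17 {J g : Matrix ι ι k'} (hJ : IsUnit J.det)
    (hg : ctr conj g * J * g = J) : IsUnit g.det :=
  isUnit_det_of_left_inverse (B := J⁻¹ * ctr conj g * J) <| by
    simp only [Matrix.mul_assoc] at hg ⊢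
    rw [hg, nonsing_inv_mul _ hJ]

end Form

section Hyperbolic

open Matrix

variable {k' : Type} [Field k'] {n : ℕ}

theorem Hmat_mul_Hmat : Hmat k' n * Hmat k' n = 1 := by
  simp [Hmat, fromBlocks_multiply, ← fromBlocks_one]

theorem Hmat_submatrix_inl_inr (m : Fin n) :
    (Hmat k' n).submatrix ![Sum.inl m, Sum.inr m] ![Sum.inl m, Sum.inr m] = H1 k' := by
  ext a b
  fin_cases a <;> fin_cases b <;> simp [Hmat, H1]

theorem Hmat_apply_eq_zero_of_ne (m : Fin n) (i : Fin n ⊕ Fin n) (hl : i ≠ Sum.inl m)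
    (hr : i ≠ Sum.inr m) :
    Hmat k' n i (Sum.inl m) = 0 ∧ Hmat k' n i (Sum.inr m) = 0 ∧
      Hmat k' n (Sum.inl m) i = 0 ∧ Hmat k' n (Sum.inr m) i = 0 := by
  rcases i with i | i <;> simp_all [Hmat, one_apply, eq_comm]

theorem lowerBlock_embed2_mul (m : Fin n) (hm : (m : ℕ) = n - 1)
    (h : Matrix (Fin 2) (Fin 2) k') (x : Matrix (Fin n ⊕ Fin n) (Fin n) k') :
    lowerBlock (embed2 (Sum.inl m) (Sum.inr m) h * x) = Mxv x ![h 1 1, -h 1 0] := by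
  ext i j
  have him : (i : ℕ) = n - 1 ↔ i = m := by rw [← hm, Fin.val_inj]
  by_cases hi : i = m
  · subst hi; simp [lowerBlock, Mxv, embed2_mul_apply Sum.inl_ne_inr, him]; ring
  · simp [lowerBlock, Mxv, embed2_mul_apply Sum.inl_ne_inr, him, hi]

end Hyperbolic

theorem fTi_self {k' : Type} [Field k'] (conj : k' ≃+* k') {n : ℕ}
    (T : Matrix (Fin n) (Fin n) k') (x : Matrix (Fin n ⊕ Fin n) (Fin n) k') :
    fTi conj T x n le_rfl = (lowerBlock x * T⁻¹ * ctr conj (lowerBlock x)).det := by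
  simp [fTi, dmin]

/-- for the embedding `h ↦ h̃` of `U(1,1)` into `U(H_n)`,
`f_«T,n»(h̃·x) = g(x,(d,−c)ᵗ)`. -/
theorem stmt17
    {k' : Type} [Field k']
    (conj : k' ≃+* k')
    (n : ℕ) (hn : 2 ≤ n)
    (T : Matrix (Fin n) (Fin n) k')
    (a b c d : k')
    (hh : ctr conj !![a, b; c, d] * H1 k' * !![a, b; c, d] = H1 k')
    (htld : Matrix (Fin n ⊕ Fin n) (Fin n ⊕ Fin n) k')
    (hdef : htld = fun i j =>
      if i = Sum.inl ⟨n - 1, by omega⟩ ∧ j = Sum.inl ⟨n - 1, by omega⟩ then a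
      else if i = Sum.inl ⟨n - 1, by omega⟩ ∧ j = Sum.inr ⟨n - 1, by omega⟩ then b
      else if i = Sum.inr ⟨n - 1, by omega⟩ ∧ j = Sum.inl ⟨n - 1, by omega⟩ then c
      else if i = Sum.inr ⟨n - 1, by omega⟩ ∧ j = Sum.inr ⟨n - 1, by omega⟩ then d
      else (1 : Matrix (Fin n ⊕ Fin n) (Fin n ⊕ Fin n) k') i j) :
    (ctr conj htld * Hmat k' n * htld = Hmat k' n ∧ IsUnit htld.det) ∧
    (∀ x : Matrix (Fin n ⊕ Fin n) (Fin n) k', ctr conj x * Hmat k' n * x = T →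
      fTi conj T (htld * x) n le_rfl = gxv conj T x ![d, -c]) := by
  set m : Fin n := ⟨n - 1, by omega⟩
  have htld_eq : htld = embed2 (Sum.inl m) (Sum.inr m) !![a, b; c, d] := hdef
  have hU : ctr conj htld * Hmat k' n * htld = Hmat k' n := by
    rw [htld_eq]
    exact ctr_embed2_mul_mul_embed2 conj Sum.inl_ne_inr _ (Hmat_apply_eq_zero_of_ne m)
      (by rwa [Hmat_submatrix_inl_inr])
  refine ⟨⟨hU, isUnit_det_of_ctr_mul_mul_eq_s17 conj
    (isUnit_det_of_left_inverse Hmat_mul_Hmat) hU⟩, fun x _ => ?_⟩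
  rw [fTi_self, htld_eq, lowerBlock_embed2_mul m rfl]
  rfl
end
end
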